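/- arXiv:0903.1348 — 2 statements merged into one kernel-verified Lean document; each statement's English description precedes it below -/
import Mathlib

section
/- Let θ ∈ (0, π/2], let f : ℝ → ℝ³ be a twice continuously differentiable curve with ‖f(v)‖ = 1 and ‖f'(v)‖ = 1 for all v ∈ ℝ, and for u > 0 set ξ(u) = cot θ · log u and r(u,v) = u·sin θ·(cos ξ(u) · f(v) + sin ξ(u) · (f(v) × f'(v))). Then for every u > 0 and v ∈ ℝ the partial derivative of r with respect to u equals −sin(ξ(u) − θ) · f(v) + cos(ξ(u) − θ) · (f(v) × f'(v)), and in particular ‖∂r/∂u(u,v)‖ = 1. -/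
open Real RealInnerProductSpace

/-- The cross product on Euclidean 3-space. -/
noncomputable def cross3 (a b : EuclideanSpace ℝ (Fin 3)) : EuclideanSpace ℝ (Fin 3) :=
  WithLp.toLp 2 ![a 1 * b 2 - a 2 * b 1, a 2 * b 0 - a 0 * b 2, a 0 * b 1 - a 1 * b 0]

/-!
Write `ξ = cot θ · log u`. Along `u ↦ r(u, v)` the frame `f(v), f(v) × f'(v)` is fixed, and it
is orthonormal because `f ⊥ f'` (differentiate `‖f‖² = 1`). Differentiating the coefficients
`u sin θ cos ξ` and `u sin θ sin ξ`, using `u ξ' = cot θ`, gives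
`sin θ cos ξ - cos θ sin ξ = -sin(ξ - θ)` and `sin θ sin ξ + cos θ cos ξ = cos(ξ - θ)`,
the coefficients of a unit vector in that frame.
-/

lemma inner_cross3_self_left (a b : EuclideanSpace ℝ (Fin 3)) : ⟪a, cross3 a b⟫ = 0 := by
  simp only [cross3, PiLp.inner_apply, RCLike.inner_apply, conj_trivial, Fin.sum_univ_three,
    Matrix.cons_val_zero, Matrix.cons_val_one, Matrix.cons_val]
  ring

lemma norm_cross3_sq (a b : EuclideanSpace ℝ (Fin 3)) :
    ‖cross3 a b‖ ^ 2 = ‖a‖ ^ 2 * ‖b‖ ^ 2 - ⟪a, b⟫ ^ 2 := by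
  simp only [← real_inner_self_eq_norm_sq, cross3, PiLp.inner_apply, RCLike.inner_apply,
    conj_trivial, Fin.sum_univ_three, Matrix.cons_val_zero, Matrix.cons_val_one, Matrix.cons_val]
  ring

lemma norm_cross3_of_orthonormal {a b : EuclideanSpace ℝ (Fin 3)} (ha : ‖a‖ = 1)
    (hb : ‖b‖ = 1) (hab : ⟪a, b⟫ = 0) : ‖cross3 a b‖ = 1 := by
  have h := norm_cross3_sq a b
  rw [ha, hb, hab] at h
  nlinarith [norm_nonneg (cross3 a b)]

section InnerProductSpace

variable {E : Type*} [NormedAddCommGroup E] [InnerProductSpace ℝ E]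

lemma inner_deriv_eq_zero_of_norm_eq {f : ℝ → E} {c : ℝ} (hf : ∀ t, ‖f t‖ = c) {t : ℝ}
    (hft : DifferentiableAt ℝ f t) : ⟪f t, deriv f t⟫ = 0 := by
  have hconst : (fun s => ⟪f s, f s⟫) = fun _ => c ^ 2 := by
    funext s
    rw [real_inner_self_eq_norm_sq, hf s]
  have h := (hft.hasDerivAt.inner ℝ hft.hasDerivAt).deriv
  rw [hconst, deriv_const, real_inner_comm (f t)] at h
  linarith

lemma norm_smul_add_smul_of_orthonormal {a b : E} (ha : ‖a‖ = 1) (hb : ‖b‖ = 1)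
    (hab : ⟪a, b⟫ = 0) {s c : ℝ} (hsc : s ^ 2 + c ^ 2 = 1) : ‖s • a + c • b‖ = 1 := by
  have hsq : ‖s • a + c • b‖ ^ 2 = 1 := by
    rw [norm_add_sq_real, norm_smul, norm_smul, real_inner_smul_left, real_inner_smul_right, hab,
      ha, hb, mul_pow, mul_pow, Real.norm_eq_abs, Real.norm_eq_abs, sq_abs, sq_abs]
    linarith
  nlinarith [norm_nonneg (s • a + c • b)]

end InnerProductSpace

section LogSpiral

variable {θ u : ℝ}

lemma cot_mul_sin (hθ : Real.sin θ ≠ 0) : Real.cot θ * Real.sin θ = Real.cos θ := by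
  rw [Real.cot_eq_cos_div_sin, div_mul_cancel₀ _ hθ]

lemma hasDerivAt_mul_sin_mul_cos_cot_mul_log (hθ : Real.sin θ ≠ 0) (hu : 0 < u) :
    HasDerivAt (fun u' => u' * Real.sin θ * Real.cos (Real.cot θ * Real.log u'))
      (-Real.sin (Real.cot θ * Real.log u - θ)) u := by
  have h := (hasDerivAt_mul_const (Real.sin θ)).mul
    (((Real.hasDerivAt_log hu.ne').const_mul (Real.cot θ)).cos)
  refine h.congr_deriv ?_
  rw [Real.sin_sub, ← cot_mul_sin hθ]
  field_simp
  ring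

lemma hasDerivAt_mul_sin_mul_sin_cot_mul_log (hθ : Real.sin θ ≠ 0) (hu : 0 < u) :
    HasDerivAt (fun u' => u' * Real.sin θ * Real.sin (Real.cot θ * Real.log u'))
      (Real.cos (Real.cot θ * Real.log u - θ)) u := by
  have h := (hasDerivAt_mul_const (Real.sin θ)).mul
    (((Real.hasDerivAt_log hu.ne').const_mul (Real.cot θ)).sin)
  refine h.congr_deriv ?_
  rw [Real.cos_sub, ← cot_mul_sin hθ]
  field_simp
  ring

lemma hasDerivAt_logSpiral {E : Type*} [NormedAddCommGroup E] [NormedSpace ℝ E] (a b : E)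
    (hθ : Real.sin θ ≠ 0) (hu : 0 < u) :
    HasDerivAt (fun u' => (u' * Real.sin θ) •
        (Real.cos (Real.cot θ * Real.log u') • a + Real.sin (Real.cot θ * Real.log u') • b))
      ((-Real.sin (Real.cot θ * Real.log u - θ)) • a +
        Real.cos (Real.cot θ * Real.log u - θ) • b) u := by
  have h := ((hasDerivAt_mul_sin_mul_cos_cot_mul_log hθ hu).smul_const a).add
    ((hasDerivAt_mul_sin_mul_sin_cot_mul_log hθ hu).smul_const b)
  convert h using 2 with u'
  simp only [Pi.add_apply, smul_add, smul_smul]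

end LogSpiral

theorem deriv_u_constant_slope_general (θ : ℝ) (hθ : θ ∈ Set.Ioc 0 (π / 2))
    (f : ℝ → EuclideanSpace ℝ (Fin 3))
    (hf1 : ∀ v, ‖f v‖ = 1) (hf'1 : ∀ v, ‖deriv f v‖ = 1)
    (r : ℝ → ℝ → EuclideanSpace ℝ (Fin 3))
    (hr : ∀ u v, 0 < u → r u v = (u * Real.sin θ) •
      (Real.cos (Real.cot θ * Real.log u) • f v +
       Real.sin (Real.cot θ * Real.log u) • cross3 (f v) (deriv f v)))
    :
    ∀ u v, 0 < u →
      deriv (fun u' => r u' v) u =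
        (-Real.sin (Real.cot θ * Real.log u - θ)) • f v +
        Real.cos (Real.cot θ * Real.log u - θ) • cross3 (f v) (deriv f v) ∧
      ‖deriv (fun u' => r u' v) u‖ = 1 := by
  intro u v hu
  have hsin : Real.sin θ ≠ 0 :=
    (Real.sin_pos_of_pos_of_lt_pi hθ.1 (by linarith [hθ.2, Real.pi_pos])).ne'
  -- `f` is differentiable at `v` because a junk `deriv f v` would be `0`, not a unit vector.
  have hfv : DifferentiableAt ℝ f v :=
    differentiableAt_of_deriv_ne_zero (by simp [← norm_ne_zero_iff, hf'1 v])
  have horth : ⟪f v, deriv f v⟫ = 0 := inner_deriv_eq_zero_of_norm_eq hf1 hfv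
  have hr_eq : (fun u' => r u' v) =ᶠ[nhds u] _ :=
    Filter.eventually_of_mem (Ioi_mem_nhds hu) fun u' hu' => hr u' v hu'
  have hderiv := ((hasDerivAt_logSpiral (f v) (cross3 (f v) (deriv f v)) hsin hu
    ).congr_of_eventuallyEq hr_eq).deriv
  refine ⟨hderiv, hderiv ▸ norm_smul_add_smul_of_orthonormal (hf1 v)
    (norm_cross3_of_orthonormal (hf1 v) (hf'1 v) horth) (inner_cross3_self_left _ _) ?_⟩
  rw [neg_sq, Real.sin_sq_add_cos_sq]

/-- `∂r/∂u = −sin(ξ−θ) f + cos(ξ−θ) f × f'`, and in particular it is a unit vector. -/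
theorem deriv_u_constant_slope (θ : ℝ) (hθ : θ ∈ Set.Ioc 0 (π / 2))
    (f : ℝ → EuclideanSpace ℝ (Fin 3)) (hf : ContDiff ℝ 2 f)
    (hf1 : ∀ v, ‖f v‖ = 1) (hf'1 : ∀ v, ‖deriv f v‖ = 1)
    (r : ℝ → ℝ → EuclideanSpace ℝ (Fin 3))
    (hr : ∀ u v, 0 < u → r u v = (u * Real.sin θ) •
      (Real.cos (Real.cot θ * Real.log u) • f v +
       Real.sin (Real.cot θ * Real.log u) • cross3 (f v) (deriv f v)))
    :
    ∀ u v, 0 < u →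
      deriv (fun u' => r u' v) u =
        (-Real.sin (Real.cot θ * Real.log u - θ)) • f v +
        Real.cos (Real.cot θ * Real.log u - θ) • cross3 (f v) (deriv f v) ∧
      ‖deriv (fun u' => r u' v) u‖ = 1 :=
  deriv_u_constant_slope_general θ hθ f hf1 hf'1 r hr
end

section
/- Let θ ∈ (0, π/2], let f : ℝ → ℝ³ be a twice continuously differentiable curve with ‖f(v)‖ = 1 and ‖f'(v)‖ = 1 for all v ∈ ℝ, and for u > 0 set ξ(u) = cot θ · log u and r(u,v) = u·sin θ·(cos ξ(u) · f(v) + sin ξ(u) · (f(v) × f'(v))). Then the second partial derivative of r with respect to u satisfies ∂²r/∂u²(u,v) = −(cot θ / u) · N(u,v) for all u > 0 and v ∈ ℝ, where N(u,v) = cos(ξ(u) − θ) · f(v) + sin(ξ(u) − θ) · (f(v) × f'(v)) is the unit normal of the surface. -/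
open Real RealInnerProductSpace

/-!
For fixed `v`, write `R(t) = cos t • A + sin t • B` with `A = f v`, `B = f v × f' v`, so that
`r(u) = u sin θ • R(ξ(u))` and `N(u) = R(ξ(u) - θ)`. Since `R'(t) = R(t + π/2)` and
`R(t + α) = cos α • R t + sin α • R(t + π/2)`, the product rule with `ξ' = cot θ / u` and
`sin θ cot θ = cos θ` gives `∂r/∂u = R(ξ + π/2 - θ)`. Differentiating once more gives
`(cot θ / u) • R(ξ + π - θ) = -(cot θ / u) • N`.
-/

section TrigComb

variable {E : Type*} [NormedAddCommGroup E] [NormedSpace ℝ E]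

noncomputable def trigComb (A B : E) (t : ℝ) : E := cos t • A + sin t • B

theorem trigComb_add (A B : E) (t α : ℝ) :
    trigComb A B (t + α) = cos α • trigComb A B t + sin α • trigComb A B (t + π / 2) := by
  simp only [trigComb, cos_add, sin_add, cos_pi_div_two, sin_pi_div_two, smul_add, smul_smul,
    sub_smul, add_smul]
  module

theorem trigComb_add_pi (A B : E) (t : ℝ) : trigComb A B (t + π) = -trigComb A B t := by
  simp only [trigComb, cos_add_pi, sin_add_pi, neg_smul, neg_add]

theorem hasDerivAt_trigComb (A B : E) (t : ℝ) :
    HasDerivAt (trigComb A B) (trigComb A B (t + π / 2)) t := by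
  refine (((hasDerivAt_cos t).smul_const A).add ((hasDerivAt_sin t).smul_const B)).congr_deriv ?_
  simp only [trigComb, cos_add_pi_div_two, sin_add_pi_div_two, neg_smul]

theorem hasDerivAt_trigComb_mul_log_add (A B : E) (c α : ℝ) {u : ℝ} (hu : u ≠ 0) :
    HasDerivAt (fun x => trigComb A B (c * log x + α))
      ((c / u) • trigComb A B (c * log u + α + π / 2)) u := by
  have hξ : HasDerivAt (fun x => c * log x + α) (c / u) u := by
    simpa [div_eq_mul_inv] using ((hasDerivAt_log hu).const_mul c).add_const α
  exact (hasDerivAt_trigComb A B _).scomp u hξ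

theorem hasDerivAt_smul_trigComb_cot_mul_log (A B : E) {θ u : ℝ} (hθ : sin θ ≠ 0)
    (hu : u ≠ 0) :
    HasDerivAt (fun x => (x * sin θ) • trigComb A B (cot θ * log x))
      (trigComb A B (cot θ * log u + (π / 2 - θ))) u := by
  refine (((hasDerivAt_mul_const (sin θ)).smul
    (by simpa using hasDerivAt_trigComb_mul_log_add A B (cot θ) 0 hu)).congr_deriv ?_)
  rw [trigComb_add _ _ _ (π / 2 - θ), cos_pi_div_two_sub, sin_pi_div_two_sub, smul_smul, add_comm]
  congr 2
  rw [cot_eq_cos_div_sin]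
  field_simp

end TrigComb

theorem second_deriv_u_constant_slope_general (θ : ℝ) (hθ : θ ∈ Set.Ioc 0 (π / 2))
    (f : ℝ → EuclideanSpace ℝ (Fin 3))
    (r : ℝ → ℝ → EuclideanSpace ℝ (Fin 3))
    (hr : ∀ u v, 0 < u → r u v = (u * Real.sin θ) •
      (Real.cos (Real.cot θ * Real.log u) • f v +
       Real.sin (Real.cot θ * Real.log u) • cross3 (f v) (deriv f v)))
    (N : ℝ → ℝ → EuclideanSpace ℝ (Fin 3))
    (hN : ∀ u v, 0 < u → N u v =
      Real.cos (Real.cot θ * Real.log u - θ) • f v +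
      Real.sin (Real.cot θ * Real.log u - θ) • cross3 (f v) (deriv f v)) :
    ∀ u v, 0 < u →
      deriv (fun u' => deriv (fun u'' => r u'' v) u') u =
        (-(Real.cot θ / u)) • N u v := by
  intro u v hu
  have hsin : sin θ ≠ 0 := (sin_pos_of_pos_of_lt_pi hθ.1 (by linarith [pi_pos, hθ.2])).ne'
  set A := f v
  set B := cross3 (f v) (deriv f v)
  have hfirst : (fun x => deriv (fun y => r y v) x) =ᶠ[nhds u]
      fun x => trigComb A B (cot θ * log x + (π / 2 - θ)) := by
    filter_upwards [Ioi_mem_nhds hu] with x hx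
    have hrx : (fun y => r y v) =ᶠ[nhds x] fun y => (y * sin θ) • trigComb A B (cot θ * log y) := by
      filter_upwards [Ioi_mem_nhds hx] with y hy using hr y v hy
    rw [hrx.deriv_eq, (hasDerivAt_smul_trigComb_cot_mul_log A B hsin (ne_of_gt hx)).deriv]
  rw [hfirst.deriv_eq, (hasDerivAt_trigComb_mul_log_add A B _ _ hu.ne').deriv, hN u v hu,
    show cot θ * log u + (π / 2 - θ) + π / 2 = cot θ * log u - θ + π by ring, trigComb_add_pi,
    smul_neg, neg_smul]
  rfl

/-- `∂²r/∂u² = −(cot θ / u) · N(u,v)`. -/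
theorem second_deriv_u_constant_slope (θ : ℝ) (hθ : θ ∈ Set.Ioc 0 (π / 2))
    (f : ℝ → EuclideanSpace ℝ (Fin 3)) (hf : ContDiff ℝ 2 f)
    (hf1 : ∀ v, ‖f v‖ = 1) (hf'1 : ∀ v, ‖deriv f v‖ = 1)
    (r : ℝ → ℝ → EuclideanSpace ℝ (Fin 3))
    (hr : ∀ u v, 0 < u → r u v = (u * Real.sin θ) •
      (Real.cos (Real.cot θ * Real.log u) • f v +
       Real.sin (Real.cot θ * Real.log u) • cross3 (f v) (deriv f v)))
    (N : ℝ → ℝ → EuclideanSpace ℝ (Fin 3))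
    (hN : ∀ u v, 0 < u → N u v =
      Real.cos (Real.cot θ * Real.log u - θ) • f v +
      Real.sin (Real.cot θ * Real.log u - θ) • cross3 (f v) (deriv f v)) :
    ∀ u v, 0 < u →
      deriv (fun u' => deriv (fun u'' => r u'' v) u') u =
        (-(Real.cot θ / u)) • N u v :=
  second_deriv_u_constant_slope_general θ hθ f r hr N hN
end
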